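/- arXiv:0802.1192 — 8 statements merged into one kernel-verified Lean document; each statement's English description precedes it below -/
import Mathlib

section
/- Let β > α > 0 and define π_{α,β} = β^α / (β^α + Γ(α,β)(β−α)e^β). Let Z be a random variable whose law is the mixture (1−π_{α,β}) F_{α,β} + π_{α,β} δ_1, where F_{α,β} is the distribution function of the incomplete gamma distribution IG(α,β,1) and δ_1 is the point mass at 1. Then for every integer m ≥ 0, E[Z^{m+1}] = ((m+α)/β) E[Z^m] − (m/β) π_{α,β}. -/
open MeasureTheory Real Filter Finset

/-- Lower incomplete gamma function `Γ(a,b) = ∫_0^b s^(a-1) e^(-s) ds`. -/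
noncomputable def lGamma (a b : ℝ) : ℝ := ∫ s in (0:ℝ)..b, s ^ (a - 1) * Real.exp (-s)

/-- The incomplete gamma distribution `IG(a,b,1)` with density
`Γ(a,b)⁻¹ b^a x^(a-1) e^(-bx)` on `(0,1)`. -/
noncomputable def igMeasure (a b : ℝ) : Measure ℝ :=
  (volume.restrict (Set.Ioo (0:ℝ) 1)).withDensity
    (fun x => ENNReal.ofReal ((lGamma a b)⁻¹ * b ^ a * x ^ (a - 1) * Real.exp (-(b * x))))

/-- The boundary atom mass `π_{a,b} = b^a / (b^a + Γ(a,b)(b-a)e^b)`. -/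
noncomputable def ligPi (a b : ℝ) : ℝ :=
  b ^ a / (b ^ a + lGamma a b * (b - a) * Real.exp b)

/-- The Langmuir-incomplete gamma distribution `LIG(a,b)`: the mixture
`(1-π_{a,b}) IG(a,b,1) + π_{a,b} δ_1`. -/
noncomputable def ligMeasure (a b : ℝ) : Measure ℝ :=
  ENNReal.ofReal (1 - ligPi a b) • igMeasure a b +
    ENNReal.ofReal (ligPi a b) • Measure.dirac 1

/-!
Write `J(s) = ∫₀¹ x^(s-1) e^(-βx) dx` and `c = β^α / Γ(α,β)`. The `k`-th moment of `LIG(α,β)` is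
`(1 - π) c J(k+α) + π`, and integrating `(x^s e^(-βx))' = s x^(s-1) e^(-βx) - β x^s e^(-βx)` over
`[0,1]` gives `β J(s+1) = s J(s) - e^(-β)`. The atom mass `π` is exactly the one for which the
boundary term is absorbed: `(1 - π) c e^(-β) = (β - α) π`.
-/

noncomputable def unitGammaIntegral (s b : ℝ) : ℝ :=
  ∫ x in (0:ℝ)..1, x ^ (s - 1) * exp (-(b * x))

lemma intervalIntegrable_rpow_mul_exp_neg_mul {c : ℝ} (hc : -1 < c) (d t₁ t₂ : ℝ) :
    IntervalIntegrable (fun x => x ^ c * exp (-(d * x))) volume t₁ t₂ :=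
  (intervalIntegral.intervalIntegrable_rpow' hc).mul_continuousOn (by fun_prop)

lemma unitGammaIntegral_add_one {s : ℝ} (hs : 0 < s) (b : ℝ) :
    b * unitGammaIntegral (s + 1) b = s * unitGammaIntegral s b - exp (-b) := by
  have hF : ∀ x ∈ Set.Ioo (0:ℝ) 1, HasDerivAt (fun x => x ^ s * exp (-(b * x)))
      (s * (x ^ (s - 1) * exp (-(b * x))) - b * (x ^ s * exp (-(b * x)))) x := by
    intro x hx
    have hexp : HasDerivAt (fun y => exp (-(b * y))) (exp (-(b * x)) * -b) x := by
      simpa using ((hasDerivAt_id x).const_mul b).neg.exp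
    exact ((hasDerivAt_rpow_const (Or.inl hx.1.ne')).mul hexp).congr_deriv (by ring)
  have hJs := intervalIntegrable_rpow_mul_exp_neg_mul (by linarith : -1 < s - 1) b 0 1
  have hJs1 := intervalIntegrable_rpow_mul_exp_neg_mul (by linarith : -1 < s) b 0 1
  have hFTC := intervalIntegral.integral_eq_sub_of_hasDerivAt_of_le zero_le_one
    ((continuous_rpow_const hs.le).mul (by fun_prop)).continuousOn hF
    ((hJs.const_mul s).sub (hJs1.const_mul b))
  rw [intervalIntegral.integral_sub (hJs.const_mul s) (hJs1.const_mul b),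
    intervalIntegral.integral_const_mul, intervalIntegral.integral_const_mul] at hFTC
  simp only [Pi.mul_apply, one_rpow, zero_rpow hs.ne', one_mul, zero_mul, mul_one, sub_zero] at hFTC
  rw [unitGammaIntegral, unitGammaIntegral, add_sub_cancel_right]
  linarith

lemma lGamma_pos {a b : ℝ} (ha : 0 < a) (hb : 0 < b) : 0 < lGamma a b := by
  refine intervalIntegral.intervalIntegral_pos_of_pos_on ?_
    (fun x hx => mul_pos (rpow_pos_of_pos hx.1 _) (exp_pos _)) hb
  simpa using intervalIntegrable_rpow_mul_exp_neg_mul (by linarith : -1 < a - 1) 1 0 b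

section LIG

variable {a b : ℝ}

lemma toReal_igDensity_smul_pow (ha : 0 < a) (hb : 0 < b) (k : ℕ) {x : ℝ} (hx : 0 < x) :
    (ENNReal.ofReal ((lGamma a b)⁻¹ * b ^ a * x ^ (a - 1) * exp (-(b * x)))).toReal • x ^ k
      = (lGamma a b)⁻¹ * b ^ a * (x ^ ((k + a) - 1) * exp (-(b * x))) := by
  have := lGamma_pos ha hb
  rw [ENNReal.toReal_ofReal (by positivity), smul_eq_mul, add_sub_assoc, rpow_add hx,
    rpow_natCast]
  ring

lemma integrable_pow_igMeasure (ha : 0 < a) (hb : 0 < b) (k : ℕ) :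
    Integrable (fun x => x ^ k) (igMeasure a b) := by
  rw [igMeasure, integrable_withDensity_iff_integrable_smul' (by fun_prop)
    (ae_of_all _ fun _ => ENNReal.ofReal_lt_top)]
  have hJ := intervalIntegrable_rpow_mul_exp_neg_mul (by linarith : -1 < (k + a) - 1) b 0 1
  rw [intervalIntegrable_iff_integrableOn_Ioc_of_le zero_le_one] at hJ
  refine IntegrableOn.congr_fun ?_ (fun x hx => (toReal_igDensity_smul_pow ha hb k hx.1).symm)
    measurableSet_Ioo
  exact (hJ.mono_set Set.Ioo_subset_Ioc_self).const_mul _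

lemma integral_pow_igMeasure (ha : 0 < a) (hb : 0 < b) (k : ℕ) :
    ∫ x, x ^ k ∂igMeasure a b = (lGamma a b)⁻¹ * b ^ a * unitGammaIntegral (k + a) b := by
  rw [igMeasure, integral_withDensity_eq_integral_toReal_smul (by fun_prop)
      (ae_of_all _ fun _ => ENNReal.ofReal_lt_top),
    setIntegral_congr_fun measurableSet_Ioo (fun x hx => toReal_igDensity_smul_pow ha hb k hx.1),
    integral_const_mul, unitGammaIntegral, intervalIntegral.integral_of_le zero_le_one,
    integral_Ioc_eq_integral_Ioo]

lemma ligPi_denom_pos (ha : 0 < a) (hab : a < b) :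
    0 < b ^ a + lGamma a b * (b - a) * exp b := by
  have hb := ha.trans hab
  have := lGamma_pos ha hb
  have : 0 < b - a := sub_pos.2 hab
  positivity

lemma ligPi_nonneg (ha : 0 < a) (hab : a < b) : 0 ≤ ligPi a b :=
  div_nonneg (rpow_nonneg (ha.trans hab).le a) (ligPi_denom_pos ha hab).le

lemma ligPi_le_one (ha : 0 < a) (hab : a < b) : ligPi a b ≤ 1 := by
  have := lGamma_pos ha (ha.trans hab)
  have : 0 < b - a := sub_pos.2 hab
  rw [ligPi, div_le_one (ligPi_denom_pos ha hab), le_add_iff_nonneg_right]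
  positivity

lemma one_sub_ligPi_mul_exp_neg (ha : 0 < a) (hab : a < b) :
    (1 - ligPi a b) * ((lGamma a b)⁻¹ * b ^ a) * exp (-b) = (b - a) * ligPi a b := by
  have := (lGamma_pos ha (ha.trans hab)).ne'
  have := (ligPi_denom_pos ha hab).ne'
  rw [ligPi, exp_neg]
  field_simp
  ring

lemma integral_pow_ligMeasure (ha : 0 < a) (hab : a < b) (k : ℕ) :
    ∫ x, x ^ k ∂ligMeasure a b
      = (1 - ligPi a b) * ((lGamma a b)⁻¹ * b ^ a * unitGammaIntegral (k + a) b) + ligPi a b := by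
  have hb := ha.trans hab
  have hdirac : Integrable (fun x : ℝ => x ^ k) (Measure.dirac 1) :=
    integrable_dirac ENNReal.coe_lt_top
  rw [ligMeasure, integral_add_measure
      ((integrable_pow_igMeasure ha hb k).smul_measure ENNReal.ofReal_ne_top)
      (hdirac.smul_measure ENNReal.ofReal_ne_top),
    integral_smul_measure, integral_smul_measure,
    ENNReal.toReal_ofReal (sub_nonneg.2 (ligPi_le_one ha hab)),
    ENNReal.toReal_ofReal (ligPi_nonneg ha hab),
    integral_dirac, integral_pow_igMeasure ha hb k, one_pow, smul_eq_mul, smul_eq_mul, mul_one]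

end LIG

/-- Moment recursion for the Langmuir-incomplete gamma distribution:
`E[Z^{m+1}] = ((m+α)/β) E[Z^m] - (m/β) π_{α,β}`. -/
theorem lig_moment_recursion (α β : ℝ) (hα : 0 < α) (hαβ : α < β) (m : ℕ) :
    ∫ x, x ^ (m + 1) ∂(ligMeasure α β) =
      ((m + α) / β) * (∫ x, x ^ m ∂(ligMeasure α β)) - (m / β) * ligPi α β := by
  have hβ : β ≠ 0 := (hα.trans hαβ).ne'
  have hrec := unitGammaIntegral_add_one (by positivity : (0:ℝ) < m + α) β
  have hbalance := one_sub_ligPi_mul_exp_neg hα hαβ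
  rw [integral_pow_ligMeasure hα hαβ, integral_pow_ligMeasure hα hαβ,
    show ((m + 1 : ℕ) : ℝ) + α = m + α + 1 by push_cast; ring]
  field_simp
  linear_combination (1 - ligPi α β) * ((lGamma α β)⁻¹ * β ^ α) * hrec - hbalance
end

section
/- For α, β > 0, lim_{N→∞} N^{-α} Σ_{k=0}^{N} (Γ(α+k)/k!) (1 − β/N)^k = ∫_0^1 x^{α-1} e^{-βx} dx = β^{-α} Γ(α,β). -/
open MeasureTheory Real Filter Finset
open scoped Nat Topology

/-!
Since `Γ(α+k) N^{-α-k} = ∫_0^∞ s^{α+k-1} e^{-Ns} ds`, the normalized sum equals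
`∫_0^∞ s^{α-1} e^{-βs} P(X_N ≤ N) ds` with `X_N` Poisson of mean `(N-β)s`. By Chernoff
bounds this probability tends to `1` for `s < 1` and to `0` for `s > 1`, both at the geometric
rate `(s e^{1-s})^N`, and dominated convergence gives `∫_0^1 s^{α-1} e^{-βs} ds`. The second
identity is the substitution `s = βx`.
-/

lemma hasSum_pow_div_factorial_exp (x : ℝ) : HasSum (fun n => x ^ n / n !) (exp x) :=
  exp_eq_exp_ℝ ▸ NormedSpace.expSeries_div_hasSum_exp x

section ChernoffBounds

variable {x r : ℝ}

lemma sum_range_pow_div_factorial_nonneg (hx : 0 ≤ x) (n : ℕ) :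
    0 ≤ ∑ k ∈ range n, x ^ k / k ! :=
  sum_nonneg fun k _ => by positivity

lemma pow_div_factorial_le_mul_div_pow (hx : 0 ≤ x) (hr₀ : 0 < r) {k m : ℕ}
    (hkm : r ^ k ≤ r ^ m) : x ^ k / k ! ≤ r ^ m * ((x / r) ^ k / k !) := by
  rw [div_pow, div_div, mul_div_assoc', le_div_iff₀ (by positivity)]
  calc x ^ k / k ! * (r ^ k * k !) = x ^ k * r ^ k := by field_simp
    _ ≤ r ^ m * x ^ k := by rw [mul_comm]; gcongr

lemma sum_range_pow_div_factorial_le (hx : 0 ≤ x) (hr : 1 ≤ r) (n : ℕ) :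
    ∑ k ∈ range (n + 1), x ^ k / k ! ≤ r ^ n * exp (x / r) := by
  have hr₀ : 0 < r := by linarith
  calc ∑ k ∈ range (n + 1), x ^ k / k !
      ≤ ∑ k ∈ range (n + 1), r ^ n * ((x / r) ^ k / k !) :=
        sum_le_sum fun k hk => pow_div_factorial_le_mul_div_pow hx hr₀
          (pow_le_pow_right₀ hr (by simpa [Nat.lt_succ_iff] using hk))
    _ = r ^ n * ∑ k ∈ range (n + 1), (x / r) ^ k / k ! := (mul_sum ..).symm
    _ ≤ r ^ n * exp (x / r) := by gcongr; exact sum_le_exp_of_nonneg (by positivity) _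

lemma exp_sub_sum_range_pow_div_factorial_le (hx : 0 ≤ x) (hr₀ : 0 < r) (hr : r ≤ 1)
    (n : ℕ) :
    exp x - ∑ k ∈ range (n + 1), x ^ k / k ! ≤ r ^ (n + 1) * exp (x / r) := by
  let head : ℕ → ℝ := fun k => if k ∈ range (n + 1) then x ^ k / k ! else 0
  have hhead : HasSum head (∑ k ∈ range (n + 1), x ^ k / k !) := by
    have h : HasSum head (∑ k ∈ range (n + 1), head k) :=
      hasSum_sum_of_ne_finset_zero fun k hk => if_neg hk
    rwa [sum_congr rfl fun k hk => if_pos hk] at h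
  have hle : exp x ≤ ∑ k ∈ range (n + 1), x ^ k / k ! + r ^ (n + 1) * exp (x / r) := by
    refine hasSum_le (fun k => ?_) (hasSum_pow_div_factorial_exp x)
      (hhead.add ((hasSum_pow_div_factorial_exp (x / r)).mul_left (r ^ (n + 1))))
    by_cases hk : k ∈ range (n + 1)
    · simp only [head, if_pos hk, le_add_iff_nonneg_right]
      positivity
    · simp only [head, if_neg hk, zero_add]
      exact pow_div_factorial_le_mul_div_pow hx hr₀
        (pow_le_pow_of_le_one hr₀.le hr (by simpa [Nat.lt_succ_iff] using hk))
  linarith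

end ChernoffBounds

section PoissonKernel

variable {β s : ℝ}

lemma exp_neg_mul_mul_exp_sub_mul (y : ℝ) :
    exp (-(y * s)) * exp ((y - β) * s) = exp (-(β * s)) := by
  rw [← exp_add]; ring_nf

lemma exp_neg_mul_mul_sum_le {N : ℕ} (hβN : β ≤ N) (hs : 0 ≤ s) :
    exp (-(N * s)) * ∑ k ∈ range (N + 1), ((N - β) * s) ^ k / k ! ≤ exp (-(β * s)) :=
  calc exp (-(N * s)) * ∑ k ∈ range (N + 1), ((N - β) * s) ^ k / k !
      ≤ exp (-(N * s)) * exp ((N - β) * s) := by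
        gcongr; exact sum_le_exp_of_nonneg (mul_nonneg (sub_nonneg.2 hβN) hs) _
    _ = exp (-(β * s)) := exp_neg_mul_mul_exp_sub_mul _

lemma exp_neg_mul_mul_pow_mul_exp (y : ℝ) (m : ℕ) :
    exp (-(y * s)) * (s ^ m * exp (y - β)) =
      exp (-(β * s)) * (s ^ m * exp ((y - β) * (1 - s))) := by
  rw [mul_left_comm, ← exp_add, mul_left_comm (exp _), ← exp_add]
  ring_nf

lemma tendsto_pow_mul_exp_mul_one_sub (β : ℝ) (hs : 0 < s) (hs1 : s ≠ 1) :
    Tendsto (fun N : ℕ => s ^ N * exp ((N - β) * (1 - s))) atTop (𝓝 0) := by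
  have hq : s * exp (1 - s) < 1 := by
    have h := add_one_lt_exp (sub_ne_zero.2 hs1)
    calc s * exp (1 - s) < exp (s - 1) * exp (1 - s) := by gcongr; linarith
      _ = 1 := by rw [← exp_add]; simp
  convert (tendsto_pow_atTop_nhds_zero_of_lt_one (by positivity) hq).const_mul
    (exp (-(β * (1 - s)))) using 1
  · ext N
    rw [mul_pow, ← exp_nat_mul, mul_left_comm, ← exp_add]
    ring_nf
  · rw [mul_zero]

lemma tendsto_exp_neg_mul_mul_sum_of_lt_one (β : ℝ) (hs : 0 < s) (hs1 : s < 1) :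
    Tendsto (fun N : ℕ => exp (-(N * s)) * ∑ k ∈ range (N + 1), ((N - β) * s) ^ k / k !)
      atTop (𝓝 (exp (-(β * s)))) := by
  have hlower := ((tendsto_pow_mul_exp_mul_one_sub β hs hs1.ne).const_mul s).const_sub 1
    |>.const_mul (exp (-(β * s)))
  rw [mul_zero, sub_zero, mul_one] at hlower
  refine tendsto_of_tendsto_of_tendsto_of_le_of_le' hlower tendsto_const_nhds ?_ ?_
  all_goals filter_upwards [tendsto_natCast_atTop_atTop.eventually_ge_atTop β] with N hN
  · have htail := exp_sub_sum_range_pow_div_factorial_le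
      (mul_nonneg (sub_nonneg.2 hN) hs.le) hs hs1.le N
    rw [mul_div_cancel_right₀ _ hs.ne'] at htail
    have hrate := exp_neg_mul_mul_pow_mul_exp (s := s) (β := β) N (N + 1)
    calc exp (-(β * s)) * (1 - s * (s ^ N * exp ((N - β) * (1 - s))))
        = exp (-(N * s)) * (exp ((N - β) * s) - s ^ (N + 1) * exp (N - β)) := by
          linear_combination hrate - exp_neg_mul_mul_exp_sub_mul (β := β) (s := s) N
      _ ≤ exp (-(N * s)) * ∑ k ∈ range (N + 1), ((N - β) * s) ^ k / k ! := by
          gcongr; linarith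
  · exact exp_neg_mul_mul_sum_le hN hs.le

lemma tendsto_exp_neg_mul_mul_sum_of_one_lt (β : ℝ) (hs : 1 < s) :
    Tendsto (fun N : ℕ => exp (-(N * s)) * ∑ k ∈ range (N + 1), ((N - β) * s) ^ k / k !)
      atTop (𝓝 0) := by
  have hs₀ : 0 < s := by linarith
  have hupper := (tendsto_pow_mul_exp_mul_one_sub β hs₀ hs.ne').const_mul (exp (-(β * s)))
  rw [mul_zero] at hupper
  refine tendsto_of_tendsto_of_tendsto_of_le_of_le' tendsto_const_nhds hupper ?_ ?_
  all_goals filter_upwards [tendsto_natCast_atTop_atTop.eventually_ge_atTop β] with N hN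
  · exact mul_nonneg (exp_pos _).le
      (sum_range_pow_div_factorial_nonneg (mul_nonneg (sub_nonneg.2 hN) hs₀.le) _)
  · have hhead := sum_range_pow_div_factorial_le (mul_nonneg (sub_nonneg.2 hN) hs₀.le) hs.le N
    rw [mul_div_cancel_right₀ _ hs₀.ne'] at hhead
    calc exp (-(N * s)) * ∑ k ∈ range (N + 1), ((N - β) * s) ^ k / k !
        ≤ exp (-(N * s)) * (s ^ N * exp (N - β)) := by gcongr
      _ = exp (-(β * s)) * (s ^ N * exp ((N - β) * (1 - s))) := exp_neg_mul_mul_pow_mul_exp N N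

lemma tendsto_exp_neg_mul_mul_sum (β : ℝ) (hs : 0 < s) (hs1 : s ≠ 1) :
    Tendsto (fun N : ℕ => exp (-(N * s)) * ∑ k ∈ range (N + 1), ((N - β) * s) ^ k / k !)
      atTop (𝓝 ((Set.Iic 1).indicator (fun s => exp (-(β * s))) s)) := by
  rcases hs1.lt_or_gt with hlt | hgt
  · rw [Set.indicator_of_mem (Set.mem_Iic.2 hlt.le)]
    exact tendsto_exp_neg_mul_mul_sum_of_lt_one β hs hlt
  · rw [Set.indicator_of_notMem (by simpa using hgt)]
    exact tendsto_exp_neg_mul_mul_sum_of_one_lt β hgt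

end PoissonKernel

section GammaIntegrals

variable {a b : ℝ}

lemma integrableOn_rpow_mul_exp_neg_mul (ha : 0 < a) (hb : 0 < b) :
    IntegrableOn (fun s => s ^ (a - 1) * exp (-(b * s))) (Set.Ioi 0) :=
  Integrable.of_integral_ne_zero <| by
    rw [integral_rpow_mul_exp_neg_mul_Ioi ha hb]; positivity

lemma integral_rpow_mul_exp_neg_mul_mul_sum (ha : 0 < a) (hb : 0 < b) (c : ℝ) (n : ℕ) :
    ∫ s in Set.Ioi 0, s ^ (a - 1) * (exp (-(b * s)) * ∑ k ∈ range n, (c * s) ^ k / k !) =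
      ∑ k ∈ range n, Gamma (a + k) / k ! * c ^ k * (1 / b) ^ (a + k) := by
  have hterm : ∀ k : ℕ, Set.EqOn (fun s => s ^ (a - 1) * (exp (-(b * s)) * ((c * s) ^ k / k !)))
      (fun s => c ^ k / k ! * (s ^ ((a + k) - 1) * exp (-(b * s)))) (Set.Ioi 0) := by
    intro k s hs
    have hpow : s ^ ((a + k) - 1) = s ^ (a - 1) * s ^ k := by
      rw [← rpow_natCast, ← rpow_add hs]; ring_nf
    simp only [hpow, mul_pow]
    ring
  simp_rw [mul_sum]
  rw [integral_finsetSum _ fun k _ =>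
    IntegrableOn.congr_fun ((integrableOn_rpow_mul_exp_neg_mul (by positivity) hb).const_mul _)
      (hterm k).symm measurableSet_Ioi]
  refine sum_congr rfl fun k _ => ?_
  rw [setIntegral_congr_fun measurableSet_Ioi (hterm k), integral_const_mul,
    integral_rpow_mul_exp_neg_mul_Ioi (by positivity) hb]
  ring

lemma integral_rpow_mul_exp_neg_mul_eq_lGamma (hb : 0 < b) {t : ℝ} (ht : 0 ≤ t) :
    ∫ x in (0:ℝ)..t, x ^ (a - 1) * exp (-(b * x)) = b ^ (-a) * lGamma a (b * t) := by
  have hsubst := intervalIntegral.integral_comp_mul_left (a := 0) (b := t)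
    (fun s => s ^ (a - 1) * exp (-s)) hb.ne'
  have hscale : ∫ x in (0:ℝ)..t, (b * x) ^ (a - 1) * exp (-(b * x)) =
      b ^ (a - 1) * ∫ x in (0:ℝ)..t, x ^ (a - 1) * exp (-(b * x)) := by
    rw [← intervalIntegral.integral_const_mul]
    refine intervalIntegral.integral_congr fun x hx => ?_
    rw [Set.uIcc_of_le ht] at hx
    simp only [mul_rpow hb.le hx.1]
    ring
  rw [mul_zero, hscale, smul_eq_mul, ← lGamma, rpow_sub_one hb.ne'] at hsubst
  rw [rpow_neg hb.le]
  have : b ^ a ≠ 0 := by positivity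
  field_simp at hsubst ⊢
  linear_combination hsubst

end GammaIntegrals

lemma rpow_neg_mul_one_sub_div_pow {y : ℝ} (hy : 0 < y) (a β : ℝ) (k : ℕ) :
    y ^ (-a) * (1 - β / y) ^ k = (y - β) ^ k * (1 / y) ^ (a + k) := by
  rw [rpow_add (by positivity), rpow_natCast, one_div, inv_rpow hy.le, ← rpow_neg hy.le,
    one_sub_div hy.ne', div_pow, inv_pow]
  ring

lemma tendsto_integral_rpow_mul_exp_neg_mul_mul_sum {a β : ℝ} (ha : 0 < a) (hβ : 0 < β) :
    Tendsto (fun N : ℕ => ∫ s in Set.Ioi 0,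
        s ^ (a - 1) * (exp (-(N * s)) * ∑ k ∈ range (N + 1), ((N - β) * s) ^ k / k !))
      atTop (𝓝 (∫ x in (0:ℝ)..1, x ^ (a - 1) * exp (-(β * x)))) := by
  rw [intervalIntegral.integral_of_le zero_le_one, ← Set.Ioi_inter_Iic,
    ← setIntegral_indicator measurableSet_Iic]
  refine tendsto_integral_filter_of_dominated_convergence (fun s => s ^ (a - 1) * exp (-(β * s)))
    (Eventually.of_forall fun N => by fun_prop) ?_ (integrableOn_rpow_mul_exp_neg_mul ha hβ) ?_
  · filter_upwards [tendsto_natCast_atTop_atTop.eventually_ge_atTop β] with N hN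
    filter_upwards [self_mem_ae_restrict measurableSet_Ioi] with s (hs : 0 < s)
    have hsum := sum_range_pow_div_factorial_nonneg (mul_nonneg (sub_nonneg.2 hN) hs.le) (N + 1)
    rw [Real.norm_of_nonneg (by positivity)]
    gcongr
    exact exp_neg_mul_mul_sum_le hN hs.le
  · filter_upwards [self_mem_ae_restrict measurableSet_Ioi, ae_restrict_of_ae (volume.ae_ne 1)]
      with s (hs : 0 < s) hs1
    rw [Set.indicator_mul_right _ (fun x => x ^ (a - 1))]
    exact (tendsto_exp_neg_mul_mul_sum β hs hs1).const_mul _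

/-- For `α, β > 0`,
`lim_N N^(-α) Σ_{k=0}^N (Γ(α+k)/k!) (1-β/N)^k = ∫_0^1 x^(α-1) e^(-βx) dx = β^(-α) Γ(α,β)`. -/
theorem tendsto_sum_gamma_ratio (α β : ℝ) (hα : 0 < α) (hβ : 0 < β) :
    Tendsto (fun N : ℕ => (N : ℝ) ^ (-α) *
        ∑ k ∈ Finset.range (N + 1),
          Real.Gamma (α + k) / (Nat.factorial k) * (1 - β / N) ^ k)
      atTop (nhds (∫ x in (0:ℝ)..1, x ^ (α - 1) * Real.exp (-(β * x)))) ∧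
    (∫ x in (0:ℝ)..1, x ^ (α - 1) * Real.exp (-(β * x))) = β ^ (-α) * lGamma α β := by
  refine ⟨(tendsto_integral_rpow_mul_exp_neg_mul_mul_sum hα hβ).congr' ?_, ?_⟩
  · filter_upwards [eventually_gt_atTop 0] with N hN
    have hN' : (0 : ℝ) < N := Nat.cast_pos.2 hN
    rw [integral_rpow_mul_exp_neg_mul_mul_sum hα hN', mul_sum]
    refine sum_congr rfl fun k _ => ?_
    rw [mul_left_comm, rpow_neg_mul_one_sub_div_pow hN', mul_assoc]
  · simpa using integral_rpow_mul_exp_neg_mul_eq_lGamma (a := α) hβ zero_le_one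
end

section
/- Let α > 0 and let (α_k) be a non-increasing sequence with α_k ↓ α and (α_k − α) log k → 0 as k → ∞. Then the product ∏_{s=0}^{k} (α+s)/(α_k+s) converges to 1 as k → ∞. -/
/-!
Every factor is at most `1` because `α ≤ α_k`. Conversely `1 + t ≤ exp t` gives
`(α + s) / (α_k + s) ≥ exp (-(α_k - α) / (α + s))`, and
`∑_{s ≤ k} 1 / (α + s) ≤ 1 / α + 1 + log k`, so the product is at least
`exp (-(α_k - α) (1 / α + 1 + log k))`, which tends to `1`.
-/

open Real Filter Finset

section

variable {α b : ℝ}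

lemma sum_range_succ_inv_add_le (hα : 0 < α) (k : ℕ) :
    ∑ s ∈ range (k + 1), (α + s)⁻¹ ≤ α⁻¹ + harmonic k := by
  rw [sum_range_succ', Nat.cast_zero, add_zero, add_comm, harmonic, Rat.cast_sum]
  gcongr with s
  push_cast
  exact inv_anti₀ (by positivity) (by linarith)

lemma exp_neg_div_le_div {x y : ℝ} (hx : 0 < x) (hy : 0 < y) :
    exp (-((y - x) / x)) ≤ x / y := by
  have h : y / x ≤ exp ((y - x) / x) := by
    calc y / x = (y - x) / x + 1 := by field_simp; ring
      _ ≤ exp ((y - x) / x) := add_one_le_exp _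
  rw [exp_neg, ← inv_div y x]
  exact inv_anti₀ (by positivity) h

lemma prod_range_div_add_le_one (hα : 0 ≤ α) (hb : α ≤ b) (k : ℕ) :
    ∏ s ∈ range k, (α + s) / (b + s) ≤ 1 := by
  have hb' : 0 ≤ b := hα.trans hb
  exact prod_le_one (fun _ _ => by positivity) fun _ _ =>
    div_le_one_of_le₀ (by linarith) (by positivity)

lemma exp_neg_mul_le_prod_range_div_add (hα : 0 < α) (hb : α ≤ b) (k : ℕ) :
    exp (-((b - α) * (α⁻¹ + (1 + log k)))) ≤ ∏ s ∈ range (k + 1), (α + s) / (b + s) := by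
  have hsum : ∑ s ∈ range (k + 1), (α + s)⁻¹ ≤ α⁻¹ + (1 + log k) :=
    (sum_range_succ_inv_add_le hα k).trans (by gcongr; exact harmonic_le_one_add_log k)
  calc exp (-((b - α) * (α⁻¹ + (1 + log k))))
      ≤ exp (∑ s ∈ range (k + 1), -((b + s - (α + s)) / (α + s))) := by
        gcongr
        simp only [add_sub_add_right_eq_sub, div_eq_mul_inv, sum_neg_distrib, ← mul_sum]
        exact neg_le_neg (mul_le_mul_of_nonneg_left hsum (by linarith))
    _ = ∏ s ∈ range (k + 1), exp (-((b + s - (α + s)) / (α + s))) := exp_sum _ _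
    _ ≤ ∏ s ∈ range (k + 1), (α + s) / (b + s) := by
        have hb' : 0 < b := hα.trans_le hb
        exact prod_le_prod (fun _ _ => (exp_pos _).le) fun _ _ =>
          exp_neg_div_le_div (by positivity) (by positivity)

end

theorem tendsto_prod_ratio_one_general (α : ℝ) (a : ℕ → ℝ)
    (hα : 0 < α)
    (ha_ge : ∀ k, α ≤ a k)
    (ha_lim : Tendsto a atTop (nhds α))
    (ha_log : Tendsto (fun k : ℕ => (a k - α) * Real.log k) atTop (nhds 0)) :
    Tendsto (fun k : ℕ => ∏ s ∈ Finset.range (k + 1), (α + s) / (a k + s))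
      atTop (nhds 1) := by
  have hexponent : Tendsto (fun k : ℕ => (a k - α) * (α⁻¹ + (1 + log k))) atTop (nhds 0) := by
    have h := ((tendsto_sub_nhds_zero_iff.mpr ha_lim).mul_const (α⁻¹ + 1)).add ha_log
    rw [zero_mul, zero_add] at h
    exact h.congr fun k => by ring
  have hlower :
      Tendsto (fun k : ℕ => exp (-((a k - α) * (α⁻¹ + (1 + log k))))) atTop (nhds 1) := by
    simpa [Function.comp_def] using (continuous_exp.tendsto _).comp hexponent.neg
  exact tendsto_of_tendsto_of_tendsto_of_le_of_le hlower tendsto_const_nhds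
    (fun k => exp_neg_mul_le_prod_range_div_add hα (ha_ge k) k)
    (fun k => prod_range_div_add_le_one hα.le (ha_ge k) (k + 1))

/-- For a non-increasing sequence of positive reals `α_k ↓ α > 0` with `(α_k - α) log k → 0`,
the product `∏_{s=0}^{k} (α+s)/(α_k+s)` converges to `1`. -/
theorem tendsto_prod_ratio_one (α : ℝ) (a : ℕ → ℝ)
    (hα : 0 < α) (ha_pos : ∀ k, 0 < a k)
    (ha_anti : Antitone a) (ha_ge : ∀ k, α ≤ a k)
    (ha_lim : Tendsto a atTop (nhds α))
    (ha_log : Tendsto (fun k : ℕ => (a k - α) * Real.log k) atTop (nhds 0)) :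
    Tendsto (fun k : ℕ => ∏ s ∈ Finset.range (k + 1), (α + s) / (a k + s))
      atTop (nhds 1) :=
  tendsto_prod_ratio_one_general α a hα ha_ge ha_lim ha_log
end

section
/- For fixed α, β > 0, the Riemann sums N^{-α} Σ_{k=k(N)+1}^{N} k^{α-1} e^{-kβ/N} converge to β^{-α} Γ(α,β) as N → ∞, where k(N) = ⌊δ log N⌋ for any fixed δ with 0 < δ < α. -/
/-!
Write `g x = x ^ (α - 1) * exp (-(β * x))` and `m = ⌊δ log N⌋`. On a cell `[j/N, (j+1)/N]` with
`j ≥ m`, the endpoints of the cell have ratio at most `1 + 1/m` and difference `1/N`, so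
`g ((j+1)/N)` lies between `e^{-β/N} (1 + 1/m)^{-|α-1|} g x` and `(1 + 1/m)^{|α-1|} g x` for every
`x` in the cell. Summing over the cells squeezes the Riemann sum between these two factors times
`∫_{m/N}^1 g`. Since `m → ∞` both factors tend to `1`, and since `m/N → 0` the integral tends to
`∫_0^1 g`, which is `β^{-α} Γ(α, β)` after the substitution `s = β x`. Cutting the sum off at
`m → ∞` is what makes the ratio bound uniform near the singularity of `x ^ (α - 1)` at `0`.
-/

open MeasureTheory Real Filter Finset

open Topology

theorem rpow_le_rpow_abs_of_one_le {t u : ℝ} (p : ℝ) (ht : 1 ≤ t) (htu : t ≤ u) :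
    t ^ p ≤ u ^ |p| :=
  (rpow_le_rpow_of_exponent_le ht (le_abs_self p)).trans
    (rpow_le_rpow (by linarith) htu (abs_nonneg p))

theorem rpow_neg_abs_le_rpow_of_one_le {t u : ℝ} (p : ℝ) (ht : 1 ≤ t) (htu : t ≤ u) :
    u ^ (-|p|) ≤ t ^ p :=
  (rpow_le_rpow_of_nonpos (by linarith) htu (neg_nonpos.2 (abs_nonneg p))).trans
    (rpow_le_rpow_of_exponent_le ht (neg_abs_le p))

theorem rpow_mul_exp_bounds {p β x y u ε : ℝ} (hβ : 0 ≤ β) (hx : 0 < x) (hxy : x ≤ y)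
    (hyu : y ≤ u * x) (hyε : y ≤ x + ε) :
    exp (-(β * ε)) * u ^ (-|p|) * (x ^ p * exp (-(β * x))) ≤ y ^ p * exp (-(β * y)) ∧
      y ^ p * exp (-(β * y)) ≤ u ^ |p| * (x ^ p * exp (-(β * x))) := by
  have ht : 1 ≤ y / x := (one_le_div hx).2 hxy
  have htu : y / x ≤ u := (div_le_iff₀ hx).2 hyu
  have hy : y ^ p = (y / x) ^ p * x ^ p := by
    rw [div_rpow (by linarith) hx.le, div_mul_cancel₀ _ (rpow_pos_of_pos hx p).ne']
  have hexp_upper : exp (-(β * y)) ≤ exp (-(β * x)) := exp_le_exp.2 (by nlinarith)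
  have hexp_lower : exp (-(β * ε)) * exp (-(β * x)) ≤ exp (-(β * y)) := by
    rw [← exp_add]; exact exp_le_exp.2 (by nlinarith)
  rw [hy]
  constructor
  · calc exp (-(β * ε)) * u ^ (-|p|) * (x ^ p * exp (-(β * x)))
        = u ^ (-|p|) * x ^ p * (exp (-(β * ε)) * exp (-(β * x))) := by ring
      _ ≤ (y / x) ^ p * x ^ p * exp (-(β * y)) := by
        gcongr
        exact rpow_neg_abs_le_rpow_of_one_le p ht htu
  · calc (y / x) ^ p * x ^ p * exp (-(β * y))
        ≤ u ^ |p| * x ^ p * exp (-(β * x)) := by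
          have hu : 0 ≤ u := by linarith
          gcongr
          exact rpow_le_rpow_abs_of_one_le p ht htu
      _ = u ^ |p| * (x ^ p * exp (-(β * x))) := by ring

theorem riemannSum_bounds {f : ℝ → ℝ} {c C : ℝ} {m N : ℕ} (hmN : m ≤ N) (hN : 0 < N)
    (hf : ∀ j ∈ Ico m N, IntervalIntegrable f volume (j / N) ((j + 1) / N))
    (hcell : ∀ j ∈ Ico m N, ∀ x ∈ Set.Icc ((j : ℝ) / N) ((j + 1) / N),
      c * f x ≤ f ((j + 1) / N) ∧ f ((j + 1) / N) ≤ C * f x) :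
    c * ∫ x in (m / N : ℝ)..1, f x ≤ ∑ k ∈ Ioc m N, f (k / N) / N ∧
      ∑ k ∈ Ioc m N, f (k / N) / N ≤ C * ∫ x in (m / N : ℝ)..1, f x := by
  have hsum : ∑ k ∈ Ioc m N, f (k / N) / N
      = ∑ j ∈ Ico m N, ∫ _ in (j / N : ℝ)..((j + 1) / N), f ((j + 1) / N) := by
    rw [← Ico_add_one_add_one_eq_Ioc, ← sum_Ico_add']
    refine sum_congr rfl fun j _ => ?_
    rw [intervalIntegral.integral_const, smul_eq_mul]
    push_cast
    ring
  have hint : ∫ x in (m / N : ℝ)..1, f x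
      = ∑ j ∈ Ico m N, ∫ x in (j / N : ℝ)..((j + 1) / N), f x := by
    have := intervalIntegral.sum_integral_adjacent_intervals_Ico
      (a := fun j : ℕ => (j : ℝ) / N) hmN (by simpa using hf)
    push_cast at this
    rwa [div_self (by positivity : (N : ℝ) ≠ 0), eq_comm] at this
  have hle : ∀ j ∈ Ico m N, (j / N : ℝ) ≤ (j + 1) / N := fun j _ => by gcongr; linarith
  rw [hsum, hint, mul_sum, mul_sum]
  constructor <;> refine sum_le_sum fun j hj => ?_ <;> rw [← intervalIntegral.integral_const_mul]
  · exact intervalIntegral.integral_mono_on (hle j hj) ((hf j hj).const_mul c)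
      intervalIntegrable_const fun x hx => (hcell j hj x hx).1
  · exact intervalIntegral.integral_mono_on (hle j hj) intervalIntegrable_const
      ((hf j hj).const_mul C) fun x hx => (hcell j hj x hx).2

theorem intervalIntegrable_rpow_mul_exp {p : ℝ} (hp : -1 < p) (β a b : ℝ) :
    IntervalIntegrable (fun x => x ^ p * exp (-(β * x))) volume a b :=
  (intervalIntegral.intervalIntegrable_rpow' hp).mul_continuousOn (by fun_prop)

theorem rpow_neg_mul_rpow_mul_exp {α : ℝ} {N : ℕ} (hN : 0 < N) (β : ℝ) (k : ℕ) :
    (N : ℝ) ^ (-α) * ((k : ℝ) ^ (α - 1) * exp (-((k : ℝ) * β / N)))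
      = ((k : ℝ) / N) ^ (α - 1) * exp (-(β * (k / N))) / N := by
  have hN' : (0 : ℝ) < N := by exact_mod_cast hN
  rw [div_rpow (Nat.cast_nonneg k) hN'.le, rpow_sub_one hN'.ne', rpow_neg hN'.le]
  field_simp [(rpow_pos_of_pos hN' α).ne']

theorem riemannSum_rpow_mul_exp_bounds {α β : ℝ} (hα : 0 < α) (hβ : 0 ≤ β) {m N : ℕ}
    (hm : 1 ≤ m) (hmN : m ≤ N) :
    exp (-(β * (1 / N))) * (1 + 1 / m : ℝ) ^ (-|α - 1|) *
        ∫ x in (m / N : ℝ)..1, x ^ (α - 1) * exp (-(β * x))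
      ≤ (N : ℝ) ^ (-α) * ∑ k ∈ Ioc m N, (k : ℝ) ^ (α - 1) * exp (-((k : ℝ) * β / N)) ∧
    (N : ℝ) ^ (-α) * ∑ k ∈ Ioc m N, (k : ℝ) ^ (α - 1) * exp (-((k : ℝ) * β / N))
      ≤ (1 + 1 / m : ℝ) ^ |α - 1| * ∫ x in (m / N : ℝ)..1, x ^ (α - 1) * exp (-(β * x)) := by
  have hN : 0 < N := by omega
  rw [mul_sum]
  simp only [rpow_neg_mul_rpow_mul_exp hN]
  refine riemannSum_bounds hmN hN
    (fun j _ => intervalIntegrable_rpow_mul_exp (by linarith) _ _ _) fun j hj x hx => ?_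
  have hmj : (m : ℝ) ≤ j := by exact_mod_cast (mem_Ico.1 hj).1
  have hm0 : (0 : ℝ) < m := by exact_mod_cast hm
  have hj0 : (0 : ℝ) < j := hm0.trans_le hmj
  have hN0 : (0 : ℝ) < N := by exact_mod_cast hN
  have hx0 : 0 < x := lt_of_lt_of_le (by positivity) hx.1
  refine rpow_mul_exp_bounds hβ hx0 hx.2 ?_ ?_
  · calc ((j : ℝ) + 1) / N = (1 + 1 / j) * (j / N) := by field_simp
      _ ≤ (1 + 1 / m) * x := by gcongr; exact hx.1
  · calc ((j : ℝ) + 1) / N = j / N + 1 / N := by ring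
      _ ≤ x + 1 / N := by gcongr; exact hx.1

theorem tendsto_floor_mul_log_div {δ : ℝ} (hδ : 0 ≤ δ) :
    Tendsto (fun N : ℕ => (⌊δ * log N⌋₊ : ℝ) / N) atTop (𝓝 0) := by
  have hlog : Tendsto (fun N : ℕ => δ * (log N / N)) atTop (𝓝 0) := by
    simpa using ((isLittleO_log_id_atTop.tendsto_div_nhds_zero).comp
      tendsto_natCast_atTop_atTop).const_mul δ
  refine tendsto_of_tendsto_of_tendsto_of_le_of_le tendsto_const_nhds hlog
    (fun N => by positivity) fun N => ?_
  rw [← mul_div_assoc]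
  gcongr
  exact Nat.floor_le (mul_nonneg hδ (log_natCast_nonneg N))

theorem tendsto_intervalIntegral_lower {f : ℝ → ℝ} (hf : ∀ a b, IntervalIntegrable f volume a b)
    {ι : Type*} {l : Filter ι} {u : ι → ℝ} {a : ℝ} (hu : Tendsto u l (𝓝 a)) (b : ℝ) :
    Tendsto (fun i => ∫ x in u i..b, f x) l (𝓝 (∫ x in a..b, f x)) := by
  simp only [intervalIntegral.integral_symm b]
  exact (((intervalIntegral.continuous_primitive hf b).tendsto a).comp hu).neg

theorem tendsto_riemannSum_rpow_mul_exp {α β : ℝ} (hα : 0 < α) (hβ : 0 ≤ β) {m : ℕ → ℕ}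
    (hm : Tendsto m atTop atTop) (hmN : Tendsto (fun N => (m N : ℝ) / N) atTop (𝓝 0)) :
    Tendsto (fun N : ℕ => (N : ℝ) ^ (-α) *
        ∑ k ∈ Ioc (m N) N, (k : ℝ) ^ (α - 1) * exp (-((k : ℝ) * β / N)))
      atTop (𝓝 (∫ x in (0 : ℝ)..1, x ^ (α - 1) * exp (-(β * x)))) := by
  have hI := tendsto_intervalIntegral_lower
    (intervalIntegrable_rpow_mul_exp (by linarith : -1 < α - 1) β) hmN 1
  have hbase : Tendsto (fun N => 1 + 1 / (m N : ℝ)) atTop (𝓝 1) := by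
    simpa using (tendsto_const_nhds (x := (1 : ℝ))).add
      (tendsto_one_div_atTop_nhds_zero_nat.comp hm)
  have hlower : Tendsto (fun N : ℕ => exp (-(β * (1 / N))) * (1 + 1 / (m N : ℝ)) ^ (-|α - 1|))
      atTop (𝓝 1) := by
    simpa using ((tendsto_one_div_atTop_nhds_zero_nat.const_mul β).neg.rexp).mul
      (hbase.rpow_const (Or.inl one_ne_zero))
  have hupper : Tendsto (fun N => (1 + 1 / (m N : ℝ)) ^ |α - 1|) atTop (𝓝 1) := by
    simpa using hbase.rpow_const (Or.inl one_ne_zero)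
  have hbounds : ∀ᶠ N in atTop, 1 ≤ m N ∧ m N ≤ N := by
    filter_upwards [hm.eventually_ge_atTop 1, hmN.eventually (gt_mem_nhds one_pos),
      eventually_gt_atTop 0] with N h1 hlt hN
    exact ⟨h1, by exact_mod_cast ((div_lt_one (by positivity)).1 hlt).le⟩
  exact tendsto_of_tendsto_of_tendsto_of_le_of_le' (by simpa using hlower.mul hI)
    (by simpa using hupper.mul hI)
    (hbounds.mono fun N h => (riemannSum_rpow_mul_exp_bounds hα hβ h.1 h.2).1)
    (hbounds.mono fun N h => (riemannSum_rpow_mul_exp_bounds hα hβ h.1 h.2).2)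

theorem rpow_neg_mul_lGamma (α : ℝ) {β : ℝ} (hβ : 0 < β) :
    β ^ (-α) * lGamma α β = ∫ x in (0 : ℝ)..1, x ^ (α - 1) * exp (-(β * x)) := by
  have hsubst := intervalIntegral.mul_integral_comp_mul_left (a := 0) (b := 1)
    (f := fun s => s ^ (α - 1) * exp (-s)) β
  simp only [mul_zero, mul_one] at hsubst
  rw [lGamma, ← hsubst, ← intervalIntegral.integral_const_mul, ← intervalIntegral.integral_const_mul]
  refine intervalIntegral.integral_congr fun x hx => ?_
  rw [Set.uIcc_of_le zero_le_one] at hx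
  rw [mul_rpow hβ.le hx.1, rpow_sub_one hβ.ne', rpow_neg hβ.le]
  field_simp [(rpow_pos_of_pos hβ α).ne']

/-- For fixed `α, β > 0` and `0 < δ < α`, with `k(N) = ⌊δ log N⌋`, the Riemann sums
`N^(-α) Σ_{k=k(N)+1}^{N} k^(α-1) e^(-kβ/N)` converge to `β^(-α) Γ(α,β)`. -/
theorem tendsto_riemann_sum (α β δ : ℝ) (hβ : 0 < β) (hδ : 0 < δ) (hδα : δ < α) :
    Tendsto (fun N : ℕ => (N : ℝ) ^ (-α) *
        ∑ k ∈ Finset.Ioc (⌊δ * Real.log N⌋₊) N,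
          (k : ℝ) ^ (α - 1) * Real.exp (-((k : ℝ) * β / N)))
      atTop (nhds (β ^ (-α) * lGamma α β)) := by
  rw [rpow_neg_mul_lGamma α hβ]
  exact tendsto_riemannSum_rpow_mul_exp (hδ.trans hδα) hβ.le
    (tendsto_nat_floor_atTop.comp
      ((tendsto_log_atTop.const_mul_atTop hδ).comp tendsto_natCast_atTop_atTop))
    (tendsto_floor_mul_log_div hδ.le)
end

section
/- For any α > 0 and δ with 0 < δ < α, with k(N) = ⌊δ log N⌋, the tail estimate N^{-α} Σ_{k=0}^{k(N)} Γ(α+k)/k! → 0 as N → ∞ holds. -/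
/-!
Since `Γ(α + k) ≤ (α + k)^k Γ(α)` and `x^k / k! ≤ eˣ`, the `k`-th term is at most `Γ(α) e^α e^k`.
The sum is therefore dominated by a geometric sum, hence by a constant times `e^{k(N)} ≤ N^δ`, and
the whole expression is `O(N^{δ - α})`, which tends to zero because `δ < α`.
-/

open Real Filter Finset

open scoped Nat Topology

namespace Real

theorem Gamma_add_nat_le_pow_mul_Gamma {α : ℝ} (hα : 0 < α) (k : ℕ) :
    Gamma (α + k) ≤ (α + k) ^ k * Gamma α := by
  induction k with
  | zero => simp
  | succ n ih =>
    have hpos : 0 < α + n := by positivity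
    rw [Nat.cast_succ, ← add_assoc, Gamma_add_one hpos.ne']
    calc (α + n) * Gamma (α + n) ≤ (α + n) * ((α + n) ^ n * Gamma α) := by gcongr
      _ = (α + n) ^ (n + 1) * Gamma α := by ring
      _ ≤ (α + n + 1) ^ (n + 1) * Gamma α := by
        gcongr ?_ ^ _ * _
        linarith

theorem Gamma_add_nat_div_factorial_le {α : ℝ} (hα : 0 < α) (k : ℕ) :
    Gamma (α + k) / k ! ≤ Gamma α * exp α * exp 1 ^ k :=
  calc Gamma (α + k) / k ! ≤ (α + k) ^ k * Gamma α / k ! := by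
        gcongr; exact Gamma_add_nat_le_pow_mul_Gamma hα k
    _ = Gamma α * ((α + k) ^ k / k !) := by ring
    _ ≤ Gamma α * exp (α + k) := by
        gcongr; exact pow_div_factorial_le_exp (x := α + k) (by positivity) k
    _ = Gamma α * exp α * exp 1 ^ k := by rw [exp_add, ← exp_one_pow]; ring

theorem sum_range_Gamma_add_nat_div_factorial_le {α : ℝ} (hα : 0 < α) (K : ℕ) :
    ∑ k ∈ range (K + 1), Gamma (α + k) / k ! ≤
      Gamma α * exp α * exp 1 / (exp 1 - 1) * exp 1 ^ K := by
  have he : 1 < exp 1 := one_lt_exp_iff.mpr one_pos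
  have hgeom : ∑ k ∈ range (K + 1), exp 1 ^ k ≤ exp 1 ^ (K + 1) / (exp 1 - 1) := by
    rw [le_div_iff₀ (by linarith), geom_sum_mul_of_one_le he.le]
    linarith
  calc ∑ k ∈ range (K + 1), Gamma (α + k) / k !
      ≤ ∑ k ∈ range (K + 1), Gamma α * exp α * exp 1 ^ k :=
        sum_le_sum fun k _ => Gamma_add_nat_div_factorial_le hα k
    _ = Gamma α * exp α * ∑ k ∈ range (K + 1), exp 1 ^ k := (mul_sum ..).symm
    _ ≤ Gamma α * exp α * (exp 1 ^ (K + 1) / (exp 1 - 1)) := by gcongr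
    _ = Gamma α * exp α * exp 1 / (exp 1 - 1) * exp 1 ^ K := by ring

theorem exp_one_pow_natFloor_mul_log_le_rpow {δ x : ℝ} (hδ : 0 ≤ δ) (hx : 1 ≤ x) :
    exp 1 ^ ⌊δ * log x⌋₊ ≤ x ^ δ := by
  rw [exp_one_pow, rpow_def_of_pos (by linarith), mul_comm (log x)]
  exact exp_le_exp.mpr (Nat.floor_le (mul_nonneg hδ (log_nonneg hx)))

end Real

theorem tendsto_head_sum_zero_general (α δ : ℝ) (hδ : 0 < δ) (hδα : δ < α) :
    Tendsto (fun N : ℕ => (N : ℝ) ^ (-α) *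
        ∑ k ∈ Finset.range (⌊δ * Real.log N⌋₊ + 1),
          Real.Gamma (α + k) / (Nat.factorial k))
      atTop (nhds 0) := by
  have hα : 0 < α := hδ.trans hδα
  set C := Gamma α * exp α * exp 1 / (exp 1 - 1)
  have hC : 0 ≤ C := div_nonneg (by positivity) (by linarith [add_one_le_exp 1])
  have hbound : ∀ᶠ N : ℕ in atTop, (N : ℝ) ^ (-α) *
      ∑ k ∈ range (⌊δ * log N⌋₊ + 1), Gamma (α + k) / k ! ≤ C * (N : ℝ) ^ (δ - α) := by
    filter_upwards [eventually_ge_atTop 1] with N hN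
    have hN : (1 : ℝ) ≤ N := by exact_mod_cast hN
    calc (N : ℝ) ^ (-α) * ∑ k ∈ range (⌊δ * log N⌋₊ + 1), Gamma (α + k) / k !
        ≤ (N : ℝ) ^ (-α) * (C * exp 1 ^ ⌊δ * log N⌋₊) := by
          gcongr; exact sum_range_Gamma_add_nat_div_factorial_le hα _
      _ ≤ (N : ℝ) ^ (-α) * (C * (N : ℝ) ^ δ) := by
          gcongr
          exact exp_one_pow_natFloor_mul_log_le_rpow hδ.le hN
      _ = C * (N : ℝ) ^ (δ - α) := by
          rw [sub_eq_neg_add, rpow_add (by linarith)]; ring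
  have hlim : Tendsto (fun N : ℕ => C * (N : ℝ) ^ (δ - α)) atTop (𝓝 0) := by
    simpa [neg_sub] using ((tendsto_rpow_neg_atTop (by linarith : 0 < α - δ)).comp
      tendsto_natCast_atTop_atTop).const_mul C
  refine squeeze_zero' (Eventually.of_forall fun N => ?_) hbound hlim
  positivity

/-- For `0 < δ < α` and `k(N) = ⌊δ log N⌋`, the tail estimate
`N^(-α) Σ_{k=0}^{k(N)} Γ(α+k)/k! → 0` as `N → ∞`. -/
theorem tendsto_head_sum_zero (α δ : ℝ) (hα : 0 < α) (hδ : 0 < δ) (hδα : δ < α) :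
    Tendsto (fun N : ℕ => (N : ℝ) ^ (-α) *
        ∑ k ∈ Finset.range (⌊δ * Real.log N⌋₊ + 1),
          Real.Gamma (α + k) / (Nat.factorial k))
      atTop (nhds 0) :=
  tendsto_head_sum_zero_general α δ hδ hδα
end

section
/- Let α > 0 and let (α_k) be a non-increasing sequence of positive reals with α_k ↓ α and (α_k − α) log k → 0. Then Γ(α_k + k)/(k! · k^{α_k - 1}) → 1 as k → ∞. -/
/-!
Write `Γ(a_k + k) / (k! k^(a_k - 1))` as the product of `Γ(a_k + k) / Γ(α + k)`,
`Γ(α + k) / (k! k^(α - 1))` and `k^(α - a_k)`. The second factor tends to `1` by Gauss's formula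
and the third because `(a_k - α) log k → 0`. The first is `Γ(a_k) / Γ(α)`, which tends to `1` by
continuity of `Γ`, times `∏_{s<k} (a_k + s) / (α + s)`. Since `1 + x ≤ exp x`, that product lies
between `1` and `exp ((a_k - α) ∑_{s<k} 1 / (α + s)) ≤ exp (C (a_k - α) (1 + log k))`,
so it tends to `1` as well.
-/

open Real Filter Finset Topology

namespace Real

theorem ne_neg_natCast_of_pos {x : ℝ} (hx : 0 < x) (m : ℕ) : x ≠ -m := by
  have : (0 : ℝ) ≤ m := m.cast_nonneg
  linarith

theorem Gamma_add_nat {x : ℝ} (hx : ∀ m : ℕ, x ≠ -m) (n : ℕ) :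
    Gamma (x + n) = Gamma x * ∏ s ∈ range n, (x + s) := by
  induction n with
  | zero => simp
  | succ n ih =>
    have hxn : x + n ≠ 0 := fun h => hx n (by linarith)
    rw [Nat.cast_succ, ← add_assoc, Gamma_add_one hxn, prod_range_succ, ih]
    ring

theorem Gamma_add_nat_div_Gamma_add_nat {x y : ℝ} (hx : ∀ m : ℕ, x ≠ -m) (hy : ∀ m : ℕ, y ≠ -m)
    (n : ℕ) :
    Gamma (x + n) / Gamma (y + n) = Gamma x / Gamma y * ∏ s ∈ range n, (x + s) / (y + s) := by
  rw [Gamma_add_nat hx, Gamma_add_nat hy, prod_div_distrib, mul_div_mul_comm]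

theorem tendsto_Gamma_add_nat_div_factorial_mul_rpow {α : ℝ} (hα : ∀ m : ℕ, α ≠ -m) :
    Tendsto (fun k : ℕ => Gamma (α + k) / (k.factorial * (k : ℝ) ^ (α - 1))) atTop (𝓝 1) := by
  have hΓ : Gamma α ≠ 0 := Gamma_ne_zero hα
  have hlim : Tendsto (fun k : ℕ => Gamma α * (k / (k + α)) / GammaSeq α k) atTop (𝓝 1) := by
    simpa [hΓ, Pi.div_def] using ((tendsto_natCast_div_add_atTop α).const_mul (Gamma α)).div
      (GammaSeq_tendsto_Gamma α) hΓ
  refine hlim.congr' ?_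
  filter_upwards [eventually_ge_atTop 1] with k hk
  have hk0 : (0 : ℝ) < k := by exact_mod_cast hk
  have hαs : ∀ s : ℕ, α + s ≠ 0 := fun s h => hα s (by linarith)
  have hprod : ∏ s ∈ range k, (α + s) ≠ 0 := prod_ne_zero_iff.mpr fun s _ => hαs s
  have hrpow : (k : ℝ) ^ α = (k : ℝ) ^ (α - 1) * k := by
    rw [← rpow_add_one hk0.ne', sub_add_cancel]
  rw [GammaSeq, prod_range_succ, Gamma_add_nat hα, hrpow]
  have hkα : (k : ℝ) + α ≠ 0 := by rw [add_comm]; exact hαs k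
  field_simp
  ring

end Real

section ProductBounds

variable {α b : ℝ}

theorem one_le_prod_add_div_add (hα : 0 < α) (hb : α ≤ b) (k : ℕ) :
    1 ≤ ∏ s ∈ range k, (b + s) / (α + s) :=
  one_le_prod fun s _ => (one_le_div (by positivity)).mpr (by linarith)

theorem prod_add_div_add_le_exp (hα : 0 < α) (hb : 0 ≤ b) (k : ℕ) :
    ∏ s ∈ range k, (b + s) / (α + s) ≤ exp ((b - α) * ∑ s ∈ range k, (α + s)⁻¹) := by
  rw [mul_sum, exp_sum]
  refine prod_le_prod (fun s _ => by positivity) fun s _ => ?_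
  have hs : α + s ≠ 0 := by positivity
  calc (b + s) / (α + s) = (b - α) * (α + s)⁻¹ + 1 := by field_simp; ring
    _ ≤ exp ((b - α) * (α + s)⁻¹) := add_one_le_exp _

theorem sum_range_inv_add_le (hα : 0 < α) (k : ℕ) :
    ∑ s ∈ range k, (α + s)⁻¹ ≤ (min α 1)⁻¹ * (1 + log k) := by
  have hm : 0 < min α 1 := lt_min hα one_pos
  calc ∑ s ∈ range k, (α + s)⁻¹ ≤ ∑ s ∈ range k, (min α 1)⁻¹ * ((s : ℝ) + 1)⁻¹ := by
        refine sum_le_sum fun s _ => ?_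
        rw [← mul_inv]
        -- `min α 1 * (s + 1) ≤ s + α`
        gcongr
        nlinarith [min_le_left α 1, min_le_right α 1, (Nat.cast_nonneg s : (0 : ℝ) ≤ s)]
    _ = (min α 1)⁻¹ * harmonic k := by
        rw [← mul_sum, harmonic]; push_cast; rfl
    _ ≤ (min α 1)⁻¹ * (1 + log k) := by gcongr; exact harmonic_le_one_add_log k

end ProductBounds

section VaryingExponent

variable {α : ℝ} {b : ℕ → ℝ}

theorem tendsto_natCast_rpow_sub_of_tendsto_mul_log
    (hlog : Tendsto (fun k : ℕ => (b k - α) * log k) atTop (𝓝 0)) :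
    Tendsto (fun k : ℕ => (k : ℝ) ^ (α - b k)) atTop (𝓝 1) := by
  have hexponent : Tendsto (fun k : ℕ => log k * (α - b k)) atTop (𝓝 0) := by
    convert hlog.neg using 1
    · ext k; ring
    · rw [neg_zero]
  have hexp : Tendsto (fun k : ℕ => exp (log k * (α - b k))) atTop (𝓝 1) := by
    simpa [Function.comp_def] using (continuous_exp.tendsto 0).comp hexponent
  refine hexp.congr' ?_
  filter_upwards [eventually_ge_atTop 1] with k hk
  rw [rpow_def_of_pos (by exact_mod_cast hk)]

theorem tendsto_prod_add_div_add (hα : 0 < α) (hb : ∀ k, α ≤ b k)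
    (hlim : Tendsto b atTop (𝓝 α))
    (hlog : Tendsto (fun k : ℕ => (b k - α) * log k) atTop (𝓝 0)) :
    Tendsto (fun k : ℕ => ∏ s ∈ range k, (b k + s) / (α + s)) atTop (𝓝 1) := by
  have hexponent : Tendsto (fun k : ℕ => (min α 1)⁻¹ * ((b k - α) + (b k - α) * log k))
      atTop (𝓝 0) := by
    simpa using ((hlim.sub_const α).add hlog).const_mul (min α 1)⁻¹
  have hupper : Tendsto (fun k : ℕ => exp ((min α 1)⁻¹ * ((b k - α) + (b k - α) * log k)))
      atTop (𝓝 1) := by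
    simpa [Function.comp_def] using (continuous_exp.tendsto 0).comp hexponent
  refine tendsto_of_tendsto_of_tendsto_of_le_of_le tendsto_const_nhds hupper
    (fun k => one_le_prod_add_div_add hα (hb k) k) fun k => ?_
  have hbk : 0 ≤ b k - α := sub_nonneg.mpr (hb k)
  calc ∏ s ∈ range k, (b k + s) / (α + s)
      ≤ exp ((b k - α) * ∑ s ∈ range k, (α + s)⁻¹) :=
        prod_add_div_add_le_exp hα (hα.le.trans (hb k)) k
    _ ≤ exp ((b k - α) * ((min α 1)⁻¹ * (1 + log k))) := by
        gcongr; exact sum_range_inv_add_le hα k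
    _ = exp ((min α 1)⁻¹ * ((b k - α) + (b k - α) * log k)) := by ring_nf

theorem tendsto_Gamma_add_nat_div_Gamma_add_nat (hα : 0 < α) (hb : ∀ k, α ≤ b k)
    (hlim : Tendsto b atTop (𝓝 α))
    (hlog : Tendsto (fun k : ℕ => (b k - α) * log k) atTop (𝓝 0)) :
    Tendsto (fun k : ℕ => Gamma (b k + k) / Gamma (α + k)) atTop (𝓝 1) := by
  have hΓ : Gamma α ≠ 0 := (Gamma_pos_of_pos hα).ne'
  have hcont : ContinuousAt Gamma α :=
    (differentiableAt_Gamma (ne_neg_natCast_of_pos hα)).continuousAt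
  have hratio : Tendsto (fun k => Gamma (b k) / Gamma α) atTop (𝓝 1) := by
    simpa [div_self hΓ] using (hcont.tendsto.comp hlim).div_const (Gamma α)
  have hsplit : ∀ k : ℕ, Gamma (b k + k) / Gamma (α + k) =
      Gamma (b k) / Gamma α * ∏ s ∈ range k, (b k + s) / (α + s) := fun k =>
    Gamma_add_nat_div_Gamma_add_nat (ne_neg_natCast_of_pos (hα.trans_le (hb k)))
      (ne_neg_natCast_of_pos hα) k
  simpa [hsplit] using hratio.mul (tendsto_prod_add_div_add hα hb hlim hlog)

end VaryingExponent

theorem gauss_formula_varying_general (α : ℝ) (a : ℕ → ℝ)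
    (hα : 0 < α)
    (ha_ge : ∀ k, α ≤ a k)
    (ha_lim : Tendsto a atTop (nhds α))
    (ha_log : Tendsto (fun k : ℕ => (a k - α) * Real.log k) atTop (nhds 0)) :
    Tendsto (fun k : ℕ => Real.Gamma (a k + k) / (Nat.factorial k * (k : ℝ) ^ (a k - 1)))
      atTop (nhds 1) := by
  have hlim := ((tendsto_Gamma_add_nat_div_Gamma_add_nat hα ha_ge ha_lim ha_log).mul
    (tendsto_Gamma_add_nat_div_factorial_mul_rpow (ne_neg_natCast_of_pos hα))).mul
    (tendsto_natCast_rpow_sub_of_tendsto_mul_log ha_log)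
  rw [one_mul, one_mul] at hlim
  refine hlim.congr' ?_
  filter_upwards [eventually_ge_atTop 1] with k hk
  have hk0 : (0 : ℝ) < k := by exact_mod_cast hk
  have hΓ : Gamma (α + k) ≠ 0 := (Gamma_pos_of_pos (by positivity)).ne'
  have hrpow : (k : ℝ) ^ (α - 1) = (k : ℝ) ^ (a k - 1) * (k : ℝ) ^ (α - a k) := by
    rw [← rpow_add hk0]; ring_nf
  rw [hrpow]
  field_simp

/-- Gauss's formula with varying exponent: if `α_k ↓ α > 0` is non-increasing, positive, and
`(α_k - α) log k → 0`, then `Γ(α_k + k)/(k! k^(α_k - 1)) → 1`. -/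
theorem gauss_formula_varying (α : ℝ) (a : ℕ → ℝ)
    (hα : 0 < α) (ha_pos : ∀ k, 0 < a k)
    (ha_anti : Antitone a) (ha_ge : ∀ k, α ≤ a k)
    (ha_lim : Tendsto a atTop (nhds α))
    (ha_log : Tendsto (fun k : ℕ => (a k - α) * Real.log k) atTop (nhds 0)) :
    Tendsto (fun k : ℕ => Real.Gamma (a k + k) / (Nat.factorial k * (k : ℝ) ^ (a k - 1)))
      atTop (nhds 1) :=
  gauss_formula_varying_general α a hα ha_ge ha_lim ha_log
end

section
/- Let X_N be the stationary distribution of the LBD process under model M_3, with birth rates b(k) = c_1(N−k) + c_3 k(N−k) and death rates d(k) = c_2 k + c_3 k(N−k) for 0 ≤ k ≤ N. Then X_N/N converges in distribution as N → ∞ to the Beta(a, b−a) distribution, where a = c_1/c_3 and b = (c_1+c_2)/c_3. -/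
/-!
Detailed balance with positive rates determines the stationary law, and the Beta-binomial weights
`∫ C(N,k) x^k (1-x)^(N-k) dBeta(a, b-a)` satisfy it because `B(x+1, y) y = B(x, y+1) x`. Hence
`E f(X_N/N)` is the Beta-integral of the `N`-th Bernstein polynomial of `f`, and these polynomials
converge to `f` uniformly on `[0, 1]`.
-/

open MeasureTheory Real Filter Finset

/-- The `Beta(a,c)` distribution on `(0,1)`, with density
`Γ(a+c)/(Γ(a)Γ(c)) x^(a-1) (1-x)^(c-1)`. -/
noncomputable def betaMeasure (a c : ℝ) : Measure ℝ :=
  (volume.restrict (Set.Ioo (0:ℝ) 1)).withDensity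
    (fun x => ENNReal.ofReal
      (Real.Gamma (a + c) / (Real.Gamma a * Real.Gamma c) * x ^ (a - 1) * (1 - x) ^ (c - 1)))

open unitInterval Topology ContinuousMap
open ProbabilityTheory (beta)

section DetailedBalance

variable {u v b d : ℕ → ℝ} {N : ℕ}

theorem eq_mul_prod_of_detailed_balance (hd : ∀ k < N, d k ≠ 0)
    (hu : ∀ k < N, u (k + 1) * d k = u k * b k) :
    ∀ k ≤ N, u k = u 0 * ∏ j ∈ range k, b j / d j := by
  intro k hk
  induction k with
  | zero => simp
  | succ k ih =>
    rw [prod_range_succ, ← mul_assoc, ← ih (by omega), mul_div_assoc', eq_div_iff (hd k hk), hu k hk]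

theorem eq_of_detailed_balance (hb : ∀ k < N, 0 < b k) (hd : ∀ k < N, 0 < d k)
    (hu : ∀ k < N, u (k + 1) * d k = u k * b k) (hv : ∀ k < N, v (k + 1) * d k = v k * b k)
    (hsum : ∑ k ∈ range (N + 1), u k = ∑ k ∈ range (N + 1), v k) :
    ∀ k ≤ N, u k = v k := by
  have hd' : ∀ k < N, d k ≠ 0 := fun k hk => (hd k hk).ne'
  have hu' := eq_mul_prod_of_detailed_balance hd' hu
  have hv' := eq_mul_prod_of_detailed_balance hd' hv
  have hpos : 0 < ∑ k ∈ range (N + 1), ∏ j ∈ range k, b j / d j :=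
    sum_pos (fun k hk => prod_pos fun j hj => div_pos (hb j (by rw [mem_range] at hk hj; omega))
      (hd j (by rw [mem_range] at hk hj; omega))) nonempty_range_add_one
  have h0 : u 0 = v 0 := by
    rw [sum_congr rfl fun k hk => hu' k (by rw [mem_range] at hk; omega),
      sum_congr rfl fun k hk => hv' k (by rw [mem_range] at hk; omega), ← mul_sum, ← mul_sum] at hsum
    exact mul_right_cancel₀ hpos.ne' hsum
  intro k hk
  rw [hu' k hk, hv' k hk, h0]

end DetailedBalance

theorem betaMeasure_eq_probabilityTheory_betaMeasure (a b : ℝ) :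
    betaMeasure a b = ProbabilityTheory.betaMeasure a b := by
  rw [betaMeasure, ← withDensity_indicator measurableSet_Ioo, ProbabilityTheory.betaMeasure]
  congr 1
  ext x
  simp only [Set.indicator, Set.mem_Ioo, ProbabilityTheory.betaPDF_eq, beta, one_div_div]
  split_ifs <;> simp

theorem isProbabilityMeasure_betaMeasure {a b : ℝ} (ha : 0 < a) (hb : 0 < b) :
    IsProbabilityMeasure (betaMeasure a b) := by
  rw [betaMeasure_eq_probabilityTheory_betaMeasure]
  exact ProbabilityTheory.isProbabilityMeasureBeta ha hb

theorem ae_mem_Ioo_betaMeasure (a b : ℝ) : ∀ᵐ x ∂betaMeasure a b, x ∈ Set.Ioo (0 : ℝ) 1 :=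
  withDensity_absolutelyContinuous _ _ (ae_restrict_mem measurableSet_Ioo)

theorem integral_betaMeasure {a b : ℝ} (ha : 0 < a) (hb : 0 < b) (g : ℝ → ℝ) :
    ∫ x, g x ∂betaMeasure a b =
      (beta a b)⁻¹ * ∫ x in Set.Ioo 0 1, x ^ (a - 1) * (1 - x) ^ (b - 1) * g x := by
  rw [betaMeasure, integral_withDensity_eq_integral_toReal_smul (by fun_prop)
    (Eventually.of_forall fun _ => ENNReal.ofReal_lt_top), ← integral_const_mul]
  refine setIntegral_congr_fun measurableSet_Ioo fun x hx => ?_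
  have h1x : 0 < 1 - x := sub_pos.2 hx.2
  have := hx.1
  rw [ENNReal.toReal_ofReal (by positivity), smul_eq_mul, beta, ← one_div_div]
  ring

theorem integral_rpow_mul_one_sub_rpow {a b : ℝ} (ha : 0 < a) (hb : 0 < b) :
    ∫ x in Set.Ioo 0 1, x ^ (a - 1) * (1 - x) ^ (b - 1) = beta a b := by
  have := isProbabilityMeasure_betaMeasure ha hb
  have h := integral_betaMeasure ha hb fun _ => 1
  simp only [integral_const, probReal_univ, smul_eq_mul, mul_one] at h
  field_simp [(ProbabilityTheory.beta_pos ha hb).ne'] at h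
  exact h.symm

theorem integral_pow_mul_one_sub_pow_betaMeasure {a b : ℝ} (ha : 0 < a) (hb : 0 < b) (k m : ℕ) :
    ∫ x, x ^ k * (1 - x) ^ m ∂betaMeasure a b = beta (a + k) (b + m) / beta a b := by
  have hmk : ∀ x ∈ Set.Ioo (0 : ℝ) 1, x ^ (a - 1) * (1 - x) ^ (b - 1) * (x ^ k * (1 - x) ^ m) =
      x ^ (a + k - 1) * (1 - x) ^ (b + m - 1) := fun x hx => by
    rw [add_sub_right_comm, add_sub_right_comm b, rpow_add hx.1, rpow_add (sub_pos.2 hx.2),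
      rpow_natCast, rpow_natCast]
    ring
  rw [integral_betaMeasure ha hb, setIntegral_congr_fun measurableSet_Ioo hmk,
    integral_rpow_mul_one_sub_rpow (by positivity) (by positivity), inv_mul_eq_div]

theorem beta_add_one_mul {x y : ℝ} (hx : 0 < x) (hy : 0 < y) :
    beta (x + 1) y * y = beta x (y + 1) * x := by
  have hxy : x + y ≠ 0 := by positivity
  simp only [beta, add_right_comm x 1 y, ← add_assoc, Gamma_add_one hx.ne', Gamma_add_one hy.ne',
    Gamma_add_one hxy]
  have := (Gamma_pos_of_pos (add_pos hx hy)).ne'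
  field_simp

/-- The probability that a binomial `Bin(N, X)` variable equals `k` when `X ∼ μ`; composing with
`projIccCM` keeps the Bernstein polynomial bounded off `[0, 1]`. -/
noncomputable def bernsteinMoment (μ : Measure ℝ) (N k : ℕ) : ℝ :=
  ∫ x, bernstein N k (projIccCM x) ∂μ

theorem integrable_comp_projIccCM (μ : Measure ℝ) [IsFiniteMeasure μ] (φ : C(I, ℝ)) :
    Integrable (fun x => φ (projIccCM x)) μ :=
  ((BoundedContinuousFunction.mkOfCompact φ).compContinuous projIccCM).integrable μ

theorem sum_bernsteinMoment (μ : Measure ℝ) [IsProbabilityMeasure μ] (N : ℕ) :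
    ∑ k ∈ range (N + 1), bernsteinMoment μ N k = 1 := by
  simp only [bernsteinMoment]
  rw [← integral_finsetSum _ fun k _ => integrable_comp_projIccCM μ _]
  simp [← Fin.sum_univ_eq_sum_range]

theorem continuous_integral_comp_projIccCM (μ : Measure ℝ) [IsFiniteMeasure μ] :
    Continuous fun φ : C(I, ℝ) => ∫ x, φ (projIccCM x) ∂μ := by
  refine (continuous_integral.comp
    (ContinuousMap.toLp (E := ℝ) 1 (μ.map (projIccCM : C(ℝ, I))) ℝ).continuous).congr fun φ => ?_
  exact (integral_congr_ae (ContinuousMap.coeFn_toLp _ φ)).trans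
    (integral_map (map_continuous _).aemeasurable φ.continuous.aestronglyMeasurable)

theorem tendsto_sum_bernsteinMoment_mul (μ : Measure ℝ) [IsFiniteMeasure μ]
    (hμ : ∀ᵐ x ∂μ, x ∈ Set.Icc (0 : ℝ) 1) {f : ℝ → ℝ} (hf : ContinuousOn f (Set.Icc 0 1)) :
    Tendsto (fun N : ℕ => ∑ k ∈ range (N + 1), bernsteinMoment μ N k * f (k / N)) atTop
      (𝓝 (∫ x, f x ∂μ)) := by
  let fI : C(I, ℝ) := ⟨_, hf.domRestrict⟩
  have hsum : ∀ N : ℕ, ∑ k ∈ range (N + 1), bernsteinMoment μ N k * f (k / N) =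
      ∫ x, bernsteinApproximation N fI (projIccCM x) ∂μ := fun N => by
    simp only [bernsteinApproximation.apply, smul_eq_mul]
    rw [integral_finsetSum _ fun k _ => (integrable_comp_projIccCM μ _).mul_const _]
    exact (Fin.sum_univ_eq_sum_range (fun k => bernsteinMoment μ N k * f (k / N)) _).symm.trans
      (sum_congr rfl fun k _ => (integral_mul_const _ _).symm)
  have hlim : ∫ x, f x ∂μ = ∫ x, fI (projIccCM x) ∂μ :=
    integral_congr_ae (hμ.mono fun x hx => by simp [fI, projIccCM, Set.projIcc_of_mem _ hx])
  simp_rw [hsum, hlim]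
  exact ((continuous_integral_comp_projIccCM μ).tendsto fI).comp (bernsteinApproximation_uniform fI)

theorem bernsteinMoment_betaMeasure {a b : ℝ} (ha : 0 < a) (hb : 0 < b) (N k : ℕ) :
    bernsteinMoment (betaMeasure a b) N k =
      N.choose k * (beta (a + k) (b + (N - k : ℕ)) / beta a b) := by
  rw [bernsteinMoment, ← integral_pow_mul_one_sub_pow_betaMeasure ha hb, ← integral_const_mul]
  refine integral_congr_ae ((ae_mem_Ioo_betaMeasure a b).mono fun x hx => ?_)
  simp [projIccCM, Set.projIcc_of_mem _ (Set.Ioo_subset_Icc_self hx), bernstein_apply, mul_assoc]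

theorem bernsteinMoment_betaMeasure_detailed_balance {a b : ℝ} (ha : 0 < a) (hb : 0 < b)
    {N k : ℕ} (hk : k < N) :
    bernsteinMoment (betaMeasure a b) N (k + 1) * ((k + 1) * (b + (N - (k + 1)))) =
      bernsteinMoment (betaMeasure a b) N k * ((N - k) * (a + k)) := by
  have hchoose : (N.choose (k + 1) : ℝ) * (k + 1) = N.choose k * (N - k) := by
    have := congrArg (Nat.cast (R := ℝ)) (Nat.choose_succ_right_eq N k)
    push_cast [Nat.cast_sub hk.le] at this
    exact this
  have hbeta := beta_add_one_mul (x := a + k) (y := b + (N - (k + 1) : ℕ)) (by positivity)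
    (by positivity)
  rw [bernsteinMoment_betaMeasure ha hb, bernsteinMoment_betaMeasure ha hb,
    show N - k = N - (k + 1) + 1 by omega]
  push_cast [Nat.cast_sub hk] at hbeta ⊢
  rw [← add_assoc a, ← add_assoc b]
  linear_combination
    (beta (a + k + 1) (b + (N - (k + 1))) * (b + (N - (k + 1))) / beta a b) * hchoose +
      (N.choose k * (N - k) / beta a b) * hbeta

theorem m3_tendsto_beta_general (c1 c2 c3 : ℝ) (hc1 : 0 < c1) (hc2 : 0 < c2) (hc3 : 0 < c3)
    (p : ℕ → ℕ → ℝ)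
    (hsum : ∀ N : ℕ, ∑ k ∈ Finset.range (N + 1), p N k = 1)
    (hdb : ∀ N : ℕ, ∀ k < N,
      p N (k + 1) * (c2 * (k + 1) + c3 * (k + 1) * ((N : ℝ) - (k + 1))) =
        p N k * (c1 * ((N : ℝ) - k) + c3 * k * ((N : ℝ) - k))) :
    ∀ f : BoundedContinuousFunction ℝ ℝ,
      Tendsto (fun N : ℕ => ∑ k ∈ Finset.range (N + 1), p N k * f ((k : ℝ) / N))
        atTop
        (nhds (∫ x, f x ∂(betaMeasure (c1 / c3) ((c1 + c2) / c3 - c1 / c3)))) := by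
  intro f
  have ha : 0 < c1 / c3 := by positivity
  have hb : 0 < c2 / c3 := by positivity
  have := isProbabilityMeasure_betaMeasure ha hb
  rw [show (c1 + c2) / c3 - c1 / c3 = c2 / c3 by ring]
  have hp : ∀ N, ∀ k ≤ N, p N k = bernsteinMoment (betaMeasure (c1 / c3) (c2 / c3)) N k := by
    intro N
    refine eq_of_detailed_balance (b := fun k => (N - k) * (c1 / c3 + k))
      (d := fun k => (k + 1) * (c2 / c3 + (N - (k + 1)))) (fun k hk => ?_) (fun k hk => ?_)
      (fun k hk => ?_) (fun k hk => bernsteinMoment_betaMeasure_detailed_balance ha hb hk) ?_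
    · have : (k : ℝ) < N := by exact_mod_cast hk
      exact mul_pos (by linarith) (by positivity)
    · have : (k : ℝ) + 1 ≤ N := by exact_mod_cast hk
      exact mul_pos (by positivity) (by linarith)
    · have := hdb N k hk
      field_simp
      linear_combination this
    · rw [hsum, sum_bernsteinMoment]
  refine (tendsto_sum_bernsteinMoment_mul _ ?_ f.continuous.continuousOn).congr fun N =>
    sum_congr rfl fun k hk => by rw [hp N k (by rw [mem_range] at hk; omega)]
  exact (ae_mem_Ioo_betaMeasure _ _).mono fun x hx => Set.Ioo_subset_Icc_self hx

/-- For the `M₃` LBD process (birth rates `b(k) = c₁(N-k) + c₃k(N-k)`, death rates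
`d(k) = c₂k + c₃k(N-k)`), the normalized stationary state `X_N/N` converges in
distribution to `Beta(a, b-a)` where `a = c₁/c₃`, `b = (c₁+c₂)/c₃`. -/
theorem m3_tendsto_beta (c1 c2 c3 : ℝ) (hc1 : 0 < c1) (hc2 : 0 < c2) (hc3 : 0 < c3)
    (p : ℕ → ℕ → ℝ)
    (hnn : ∀ N k, 0 ≤ p N k)
    (hsum : ∀ N : ℕ, ∑ k ∈ Finset.range (N + 1), p N k = 1)
    (hdb : ∀ N : ℕ, ∀ k < N,
      p N (k + 1) * (c2 * (k + 1) + c3 * (k + 1) * ((N : ℝ) - (k + 1))) =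
        p N k * (c1 * ((N : ℝ) - k) + c3 * k * ((N : ℝ) - k))) :
    ∀ f : BoundedContinuousFunction ℝ ℝ,
      Tendsto (fun N : ℕ => ∑ k ∈ Finset.range (N + 1), p N k * f ((k : ℝ) / N))
        atTop
        (nhds (∫ x, f x ∂(betaMeasure (c1 / c3) ((c1 + c2) / c3 - c1 / c3)))) :=
  m3_tendsto_beta_general c1 c2 c3 hc1 hc2 hc3 p hsum hdb
end

section
/- Under model M_3 with b(k) = c_1(N−k) + c_3 k(N−k) and d(k) = c_2 k + c_3 k(N−k), the stationary distribution is explicitly p(k) ∝ C(N,k) ∏_{s=0}^{k-1} (c_1 + c_3 s)/(c_2 + c_3(N−s−1)), i.e. p(k) ∝ C(N,k) · Γ(a+k)/Γ(a) · Γ(b−a+N−k)/Γ(b−a+N) · Γ(b−a+N)/(Γ(b−a)) with a = c_1/c_3, b−a = c_2/c_3; this is a beta-binomial-type distribution on {0,…,N}. -/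
open Real Finset

/-!
Detailed balance `p (k+1) d (k+1) = p k b k` determines `p` from `p 0` as a product of the ratios
`b s / d (s+1)`. For `M₃` each ratio splits as `(N-s)/(s+1)` times `(c₁+c₃s)/(c₂+c₃(N-s-1))`; the
first factors multiply to `C(N,k)`, and after dividing by `c₃` the second are a rising product
`∏ (a+s)` over a falling product `∏ (b-a+N-1-s)`, both quotients of Gamma values by `Γ(x+1) = xΓ(x)`.
-/

theorem eq_mul_prod_of_detailed_balance_s18 {K : Type*} [Field K] (p birth death : ℕ → K) (N : ℕ)
    (hdeath : ∀ k < N, death (k + 1) ≠ 0)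
    (hdb : ∀ k < N, p (k + 1) * death (k + 1) = p k * birth k) :
    ∀ k ≤ N, p k = p 0 * ∏ s ∈ range k, birth s / death (s + 1) := by
  intro k hk
  induction k with
  | zero => simp
  | succ k ih =>
    rw [prod_range_succ, ← mul_assoc, ← ih (by omega), mul_div_assoc',
      eq_div_iff (hdeath k hk), hdb k hk]

theorem prod_range_cast_sub_div_add_one_eq_choose {K : Type*} [Field K] [CharZero K] (N k : ℕ) :
    ∏ s ∈ range k, ((N : K) - s) / (s + 1) = N.choose k := by
  rw [Nat.cast_choose_eq_descPochhammer_div, descPochhammer_eval_eq_prod_range, prod_div_distrib,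
    ← prod_range_add_one_eq_factorial]
  push_cast
  rfl

theorem Real.Gamma_add_nat_div_Gamma {a : ℝ} (ha : 0 < a) (k : ℕ) :
    Gamma (a + k) / Gamma a = ∏ s ∈ range k, (a + s) := by
  induction k with
  | zero => simp [(Gamma_pos_of_pos ha).ne']
  | succ k ih =>
    rw [prod_range_succ, ← ih, Nat.cast_succ, ← add_assoc, Gamma_add_one (by positivity)]
    ring

theorem Real.Gamma_div_Gamma_sub_nat {x : ℝ} {k : ℕ} (hx : (k : ℝ) < x) :
    Gamma x / Gamma (x - k) = ∏ s ∈ range k, (x - 1 - s) := by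
  induction k with
  | zero => simp [(Gamma_pos_of_pos (by simpa using hx)).ne']
  | succ k ih =>
    push_cast at hx
    have hy : 0 < x - 1 - k := by linarith
    have hsub : x - (k + 1 : ℕ) = x - 1 - k := by push_cast; ring
    have hrec : Gamma (x - k) = (x - 1 - k) * Gamma (x - 1 - k) := by
      rw [← Gamma_add_one hy.ne']; ring_nf
    rw [prod_range_succ, ← ih (by linarith), hrec, hsub]
    field_simp [hy.ne', (Gamma_pos_of_pos hy).ne']

theorem prod_range_add_div_sub_eq_Gamma_div {a x : ℝ} (ha : 0 < a) {k : ℕ} (hx : (k : ℝ) < x) :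
    ∏ s ∈ range k, (a + s) / (x - 1 - s) = Gamma (a + k) / Gamma a * (Gamma (x - k) / Gamma x) := by
  rw [prod_div_distrib, Real.Gamma_add_nat_div_Gamma ha, ← Real.Gamma_div_Gamma_sub_nat hx,
    div_div_eq_mul_div, mul_div_assoc]

theorem m3_eq_choose_mul_prod (c1 c2 c3 : ℝ) (hc2 : 0 < c2) (hc3 : 0 ≤ c3) (N : ℕ) (p : ℕ → ℝ)
    (hdb : ∀ k < N,
      p (k + 1) * (c2 * (k + 1) + c3 * (k + 1) * ((N : ℝ) - (k + 1))) =
        p k * (c1 * ((N : ℝ) - k) + c3 * k * ((N : ℝ) - k))) :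
    ∀ k ≤ N, p k = p 0 * (N.choose k : ℝ) *
      ∏ s ∈ range k, (c1 + c3 * s) / (c2 + c3 * ((N : ℝ) - s - 1)) := by
  intro k hk
  rw [eq_mul_prod_of_detailed_balance_s18 p (fun k => c1 * ((N : ℝ) - k) + c3 * k * ((N : ℝ) - k))
    (fun k => c2 * k + c3 * k * ((N : ℝ) - k)) N (fun k hk => ?_) (fun k hk => ?_) k hk,
    ← prod_range_cast_sub_div_add_one_eq_choose, mul_assoc, ← prod_mul_distrib]
  · congr 1
    refine prod_congr rfl fun s _ => ?_
    push_cast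
    rw [← mul_div_mul_comm]
    congr 1 <;> ring
  · have hgap : (0 : ℝ) ≤ N - (k + 1) := by
      rw [sub_nonneg]; exact_mod_cast hk
    push_cast
    positivity
  · push_cast
    exact hdb k hk

/-- For the `M₃` LBD process (birth rates `b(k) = c₁(N-k) + c₃k(N-k)`, death rates
`d(k) = c₂k + c₃k(N-k)`), the stationary distribution (satisfying detailed balance) is
explicitly a beta-binomial-type law:
`p(k) = p(0) C(N,k) ∏_{s=0}^{k-1} (c₁+c₃s)/(c₂+c₃(N-s-1))`, i.e.
`p(k) = p(0) C(N,k) (Γ(a+k)/Γ(a)) (Γ(b-a+N-k)/Γ(b-a+N))` with `a = c₁/c₃`,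
`b-a = c₂/c₃`. -/
theorem m3_stationary_formula (c1 c2 c3 : ℝ) (hc1 : 0 < c1) (hc2 : 0 < c2) (hc3 : 0 < c3)
    (N : ℕ) (p : ℕ → ℝ)
    (hdb : ∀ k < N,
      p (k + 1) * (c2 * (k + 1) + c3 * (k + 1) * ((N : ℝ) - (k + 1))) =
        p k * (c1 * ((N : ℝ) - k) + c3 * k * ((N : ℝ) - k))) :
    ∀ k ≤ N,
      p k = p 0 * (N.choose k : ℝ) *
          ∏ s ∈ Finset.range k, (c1 + c3 * s) / (c2 + c3 * ((N : ℝ) - s - 1)) ∧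
      p k = p 0 * (N.choose k : ℝ) *
          (Real.Gamma (c1 / c3 + k) / Real.Gamma (c1 / c3)) *
          (Real.Gamma (c2 / c3 + N - k) / Real.Gamma (c2 / c3 + N)) := by
  intro k hk
  have hprod := m3_eq_choose_mul_prod c1 c2 c3 hc2 hc3.le N p hdb k hk
  have hscale : ∀ s : ℕ, (c1 + c3 * s) / (c2 + c3 * ((N : ℝ) - s - 1)) =
      (c1 / c3 + s) / (c2 / c3 + N - 1 - s) := fun s =>
    calc _ = (c3 * (c1 / c3 + s)) / (c3 * (c2 / c3 + N - 1 - s)) := by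
          congr 1
          · field_simp
          · field_simp; ring
      _ = _ := mul_div_mul_left _ _ hc3.ne'
  have hkN : (k : ℝ) < c2 / c3 + N := by
    have : (k : ℝ) ≤ N := by exact_mod_cast hk
    linarith [div_pos hc2 hc3]
  refine ⟨hprod, ?_⟩
  rw [hprod, prod_congr rfl fun s _ => hscale s,
    prod_range_add_div_sub_eq_Gamma_div (div_pos hc1 hc3) hkN]
  ring
end
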